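/- arXiv:2605.28677 — 3 statements merged into one kernel-verified Lean document; each statement's English description precedes it below -/
import Mathlib

section
/- Let Γ be the algebra endomorphism of the formal power series ring ℝ[[z_k, z_n]] determined by Γz_k = z_k, Γz_n = z_n + π^{(n)}, Γ1 = 1, and multiplicativity, where (π^{(n)})_n ⊂ ℝ[[z_k,z_n]] satisfies: π^{(n)}_β ≠ 0 ⟹ |n| < |β|. Then Γ is well-defined on ℝ[[z_k,z_n]] (for every β, the coefficient (Γπ)_β involves only finitely many γ with Γ_β^γ ≠ 0), and Γ is strictly triangular with respect to homogeneity: (Γ − id)_β^γ ≠ 0 implies |γ| < |β|. -/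
/-- Polynomial multiindices `n ∈ ℕ^{1+d}`. -/
abbrev PIdx (d : ℕ) := Fin (d + 1) →₀ ℕ

/-- Multiindices `β` over the variables `z_k` (`k : ℕ`, left summand) and `z_n`
(`n ∈ ℕ^{1+d}`, right summand), indexing the monomials `z^β` of `ℝ[[z_k, z_n]]`. -/
abbrev MIdx (d : ℕ) := (ℕ ⊕ PIdx d) →₀ ℕ

/-- Parabolic degree `|n| = 2 n₀ + n₁ + ⋯ + n_d`. -/
def pDeg {d : ℕ} (n : PIdx d) : ℕ := n 0 + n.sum fun _ v => v

/-- `Σ_k β(k)`. -/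
def kSum {d : ℕ} (β : MIdx d) : ℕ :=
  β.sum fun j m => match j with
    | Sum.inl _ => m
    | Sum.inr _ => 0

/-- `Σ_n β(n)`. -/
def nSum {d : ℕ} (β : MIdx d) : ℕ :=
  β.sum fun j m => match j with
    | Sum.inl _ => 0
    | Sum.inr _ => m

/-- `Σ_n |n| β(n)`. -/
def npSum {d : ℕ} (β : MIdx d) : ℕ :=
  β.sum fun j m => match j with
    | Sum.inl _ => 0
    | Sum.inr n => pDeg n * m

/-- The bracket `[β] = Σ_k (k−1) β(k) − Σ_n β(n)`. -/
def brk {d : ℕ} (β : MIdx d) : ℤ :=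
  β.sum fun j m => match j with
    | Sum.inl k => ((k : ℤ) - 1) * (m : ℤ)
    | Sum.inr _ => -(m : ℤ)

/-- Homogeneity `|β| = α(1 + (k̲−1) Σ_k β(k) − Σ_n β(n)) + 2 Σ_k β(k) + Σ_n |n| β(n)`. -/
noncomputable def homog {d : ℕ} (α : ℝ) (kb : ℕ) (β : MIdx d) : ℝ :=
  α * (1 + ((kb : ℝ) - 1) * (kSum β : ℝ) - (nSum β : ℝ))
    + 2 * (kSum β : ℝ) + (npSum β : ℝ)

/-!
The quantity `|β| - α` is additive in `β`. Call `γ ≼ β` if `γ = β` or `|γ| < |β|`, and in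
addition `γ(k) ≤ β(k)` for every `k`; this relation is compatible with addition. Since `Γ` is
multiplicative, `Γ_β^{γ₁+γ₂} = ∑_{β₁+β₂=β} Γ_{β₁}^{γ₁} Γ_{β₂}^{γ₂}`, so "`Γ_β^γ ≠ 0 ⟹ γ ≼ β`"
propagates from the generators `z_k`, `z_n` (where it is the hypothesis on `π^{(n)}`) to all
monomials. In `Γ_γ^γ` the same expansion leaves only the term `β₁ = γ₁`, `β₂ = γ₂`, because a
strict drop in one factor would make `|γ| < |γ|`; hence the diagonal is `1`. Finally, as `α < 0`
and `2 + (k̲-1)α > 0`, the bound `|γ| ≤ |β|` controls `Σ_n |n| γ(n)` and `Σ_n γ(n)`, and together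
with `γ(k) ≤ β(k)` this confines `γ` to a finite box.
-/

open Finset

section Multiplicative

variable {M R : Type*} [AddCommMonoid M] [HasAntidiagonal M] [Semiring R]

/-- `Γ z^{γ₁+γ₂} = Γ z^{γ₁} · Γ z^{γ₂}`, read on the coefficients `Γ β γ = (Γ z^γ)_β`. -/
def IsMultiplicative (Γ : M → M → R) : Prop :=
  ∀ γ₁ γ₂ β : M, Γ β (γ₁ + γ₂) = ∑ p ∈ antidiagonal β, Γ p.1 γ₁ * Γ p.2 γ₂

variable {Γ : M → M → R} {r : M → M → Prop}

theorem IsMultiplicative.exists_ne_zero (hΓ : IsMultiplicative Γ) {γ₁ γ₂ β : M}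
    (h : Γ β (γ₁ + γ₂) ≠ 0) : ∃ β₁ β₂, β₁ + β₂ = β ∧ Γ β₁ γ₁ ≠ 0 ∧ Γ β₂ γ₂ ≠ 0 := by
  rw [hΓ] at h
  obtain ⟨p, hp, hne⟩ := exists_ne_zero_of_sum_ne_zero h
  exact ⟨p.1, p.2, mem_antidiagonal.mp hp, left_ne_zero_of_mul hne, right_ne_zero_of_mul hne⟩

theorem IsMultiplicative.rel_of_ne_zero_add (hΓ : IsMultiplicative Γ)
    (hr : ∀ {a b c e}, r a b → r c e → r (a + c) (b + e)) {γ₁ γ₂ : M}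
    (h₁ : ∀ β, Γ β γ₁ ≠ 0 → r γ₁ β) (h₂ : ∀ β, Γ β γ₂ ≠ 0 → r γ₂ β) (β : M)
    (h : Γ β (γ₁ + γ₂) ≠ 0) : r (γ₁ + γ₂) β := by
  obtain ⟨β₁, β₂, rfl, hβ₁, hβ₂⟩ := hΓ.exists_ne_zero h
  exact hr (h₁ β₁ hβ₁) (h₂ β₂ hβ₂)

theorem IsMultiplicative.apply_add_self (hΓ : IsMultiplicative Γ)
    (hsupp : ∀ γ β, Γ β γ ≠ 0 → r γ β)
    (hcancel : ∀ {a b c e}, r a b → r c e → a + c = b + e → a = b ∧ c = e) {γ₁ γ₂ : M}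
    (h₁ : Γ γ₁ γ₁ = 1) (h₂ : Γ γ₂ γ₂ = 1) : Γ (γ₁ + γ₂) (γ₁ + γ₂) = 1 := by
  rw [hΓ, sum_eq_single_of_mem (γ₁, γ₂) (mem_antidiagonal.mpr rfl), h₁, h₂, one_mul]
  intro p hp hpne
  by_contra hne
  obtain ⟨rfl, rfl⟩ := hcancel (hsupp _ _ (left_ne_zero_of_mul hne))
    (hsupp _ _ (right_ne_zero_of_mul hne)) (mem_antidiagonal.mp hp).symm
  exact hpne rfl

end Multiplicative

theorem Finsupp.induction_single_one {ι : Type*} {p : (ι →₀ ℕ) → Prop} (h0 : p 0)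
    (hadd : ∀ f g, p f → p g → p (f + g)) (hsingle : ∀ i, p (Finsupp.single i 1))
    (f : ι →₀ ℕ) : p f := by
  induction f using Finsupp.induction_linear with
  | zero => exact h0
  | add f g hf hg => exact hadd f g hf hg
  | single i n =>
    induction n with
    | zero => simpa using h0
    | succ n ih => rw [Finsupp.single_add]; exact hadd _ _ ih (hsingle i)

section Monomials

variable {ι R : Type*} [HasAntidiagonal (ι →₀ ℕ)] [Semiring R] {Γ : (ι →₀ ℕ) → (ι →₀ ℕ) → R}
  {r : (ι →₀ ℕ) → (ι →₀ ℕ) → Prop}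

theorem IsMultiplicative.rel_of_ne_zero (hΓ : IsMultiplicative Γ)
    (hr : ∀ {a b c e}, r a b → r c e → r (a + c) (b + e)) (h0 : ∀ β, Γ β 0 ≠ 0 → r 0 β)
    (hsingle : ∀ i β, Γ β (Finsupp.single i 1) ≠ 0 → r (Finsupp.single i 1) β) :
    ∀ γ β, Γ β γ ≠ 0 → r γ β :=
  Finsupp.induction_single_one h0 (fun _ _ ↦ hΓ.rel_of_ne_zero_add hr) hsingle

theorem IsMultiplicative.apply_self (hΓ : IsMultiplicative Γ)
    (hsupp : ∀ γ β, Γ β γ ≠ 0 → r γ β)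
    (hcancel : ∀ {a b c e}, r a b → r c e → a + c = b + e → a = b ∧ c = e) (h0 : Γ 0 0 = 1)
    (hsingle : ∀ i, Γ (Finsupp.single i 1) (Finsupp.single i 1) = 1) : ∀ γ, Γ γ γ = 1 :=
  Finsupp.induction_single_one h0 (fun _ _ ↦ hΓ.apply_add_self hsupp hcancel) hsingle

end Monomials

section Homogeneity

variable {d : ℕ} (α : ℝ) (kb : ℕ)

theorem kSum_add (β γ : MIdx d) : kSum (β + γ) = kSum β + kSum γ := by
  unfold kSum; apply Finsupp.sum_add_index' <;> rintro (_ | _) <;> simp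

theorem nSum_add (β γ : MIdx d) : nSum (β + γ) = nSum β + nSum γ := by
  unfold nSum; apply Finsupp.sum_add_index' <;> rintro (_ | _) <;> simp

theorem npSum_add (β γ : MIdx d) : npSum (β + γ) = npSum β + npSum γ := by
  unfold npSum; apply Finsupp.sum_add_index' <;> rintro (_ | _) <;> simp [mul_add]

theorem homog_add (β γ : MIdx d) : homog α kb (β + γ) = homog α kb β + homog α kb γ - α := by
  unfold homog; rw [kSum_add, nSum_add, npSum_add]; push_cast; ring

theorem homog_single_inr (n : PIdx d) : homog α kb (Finsupp.single (Sum.inr n) 1) = pDeg n := by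
  simp [homog, kSum, nSum, npSum]

theorem homog_eq (γ : MIdx d) : homog α kb γ =
    α + (2 + ((kb : ℝ) - 1) * α) * kSum γ + (npSum γ - α * nSum γ) := by
  unfold homog; ring

theorem apply_le_pDeg (n : PIdx d) (i : Fin (d + 1)) : n i ≤ pDeg n :=
  (n.single_eval_le_sum (g := id) rfl (fun _ ↦ Nat.zero_le _) i).trans (Nat.le_add_left _ _)

theorem apply_inr_le_nSum (γ : MIdx d) (n : PIdx d) : γ (Sum.inr n) ≤ nSum γ := by
  have h := γ.single_le_sum (g := fun j m ↦ match j with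
    | Sum.inl _ => 0
    | Sum.inr _ => m) (fun _ _ ↦ Nat.zero_le _) (Sum.inr n)
  rwa [Finsupp.sum_single_index rfl] at h

theorem pDeg_mul_le_npSum (γ : MIdx d) (n : PIdx d) : pDeg n * γ (Sum.inr n) ≤ npSum γ := by
  have h := γ.single_le_sum (g := fun j m ↦ match j with
    | Sum.inl _ => 0
    | Sum.inr n => pDeg n * m) (fun _ _ ↦ Nat.zero_le _) (Sum.inr n)
  rwa [Finsupp.sum_single_index (mul_zero _)] at h

end Homogeneity

section Precedes

variable {d : ℕ} (α : ℝ) (kb : ℕ)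

/-- The condition on the exponents of the `z_k` is needed because `|·|` does not see which `k`
occurs: without it the set of `γ ≼ β` would be infinite. -/
def Precedes (γ β : MIdx d) : Prop :=
  (∀ k, γ (Sum.inl k) ≤ β (Sum.inl k)) ∧ (γ = β ∨ homog α kb γ < homog α kb β)

variable {α kb}

theorem Precedes.refl (β : MIdx d) : Precedes α kb β β :=
  ⟨fun _ ↦ le_rfl, Or.inl rfl⟩

theorem Precedes.add {a b c e : MIdx d} (h₁ : Precedes α kb a b) (h₂ : Precedes α kb c e) :
    Precedes α kb (a + c) (b + e) := by
  refine ⟨fun k ↦ add_le_add (h₁.1 k) (h₂.1 k), ?_⟩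
  rw [homog_add, homog_add]
  rcases h₁.2 with rfl | h₁ <;> rcases h₂.2 with rfl | h₂
  · exact Or.inl rfl
  all_goals exact Or.inr (by linarith)

theorem Precedes.eq_of_add_eq {a b c e : MIdx d} (h₁ : Precedes α kb a b)
    (h₂ : Precedes α kb c e) (h : a + c = b + e) : a = b ∧ c = e := by
  have hh := congrArg (homog α kb) h
  rw [homog_add, homog_add] at hh
  rcases h₁.2 with rfl | h₁ <;> rcases h₂.2 with rfl | h₂
  · exact ⟨rfl, rfl⟩
  all_goals linarith

theorem precedes_single_inr {n : PIdx d} {β : MIdx d} (h : (pDeg n : ℝ) < homog α kb β) :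
    Precedes α kb (Finsupp.single (Sum.inr n) 1) β :=
  ⟨fun k ↦ by simp, Or.inr (by rwa [homog_single_inr])⟩

theorem finite_setOf_npSum_le_nSum_le (β : MIdx d) (N : ℕ) :
    {γ : MIdx d | (∀ k, γ (Sum.inl k) ≤ β (Sum.inl k)) ∧ npSum γ ≤ N ∧ nSum γ ≤ N}.Finite := by
  classical
  let box : MIdx d := β + ∑ n ∈ Iic (Finsupp.equivFunOnFinite.symm fun _ ↦ N),
    Finsupp.single (Sum.inr n) N
  refine (Set.finite_Iic box).subset fun γ ⟨hk, hnp, hn⟩ ↦ ?_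
  rintro (k | n)
  · simpa [box] using hk k
  · by_cases h0 : γ (Sum.inr n) = 0
    · simp [h0]
    have hpDeg : pDeg n ≤ N :=
      (Nat.le_mul_of_pos_right _ (Nat.pos_of_ne_zero h0)).trans ((pDeg_mul_le_npSum γ n).trans hnp)
    have hn_mem : n ∈ Iic (Finsupp.equivFunOnFinite.symm fun _ ↦ N) :=
      mem_Iic.mpr fun i ↦ (apply_le_pDeg n i).trans hpDeg
    simp only [box, Finsupp.coe_add, Pi.add_apply, Finsupp.finsetSum_apply,
      Finsupp.single_apply, Sum.inr.injEq, sum_ite_eq', if_pos hn_mem]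
    exact ((apply_inr_le_nSum γ n).trans hn).trans (Nat.le_add_left _ _)

theorem finite_setOf_precedes (hα : α < 0) (ha : 0 < 2 + ((kb : ℝ) - 1) * α) (β : MIdx d) :
    {γ | Precedes α kb γ β}.Finite := by
  set C := homog α kb β - α
  let N := ⌈C⌉₊ + ⌈C / -α⌉₊
  refine (finite_setOf_npSum_le_nSum_le β N).subset fun γ hγ ↦ ⟨hγ.1, ?_⟩
  have hle : homog α kb γ ≤ homog α kb β := hγ.2.elim (fun h ↦ h ▸ le_rfl) le_of_lt
  have hbound : (npSum γ : ℝ) + -α * nSum γ ≤ C := by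
    rw [homog_eq] at hle
    have : (0 : ℝ) ≤ (2 + ((kb : ℝ) - 1) * α) * kSum γ := by positivity
    linarith
  have hnp : (npSum γ : ℝ) ≤ C := by nlinarith [(nSum γ).cast_nonneg (α := ℝ)]
  have hn : (nSum γ : ℝ) ≤ C / -α := by
    rw [le_div_iff₀ (neg_pos.mpr hα)]
    linarith [(npSum γ).cast_nonneg (α := ℝ)]
  constructor
  · exact (Nat.cast_le.mp (hnp.trans (Nat.le_ceil _))).trans (Nat.le_add_right _ _)
  · exact (Nat.cast_le.mp (hn.trans (Nat.le_ceil _))).trans (Nat.le_add_left _ _)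

end Precedes

theorem gamma_welldefined_triangular_general {d : ℕ} (α : ℝ) (kb : ℕ)
    (hα : α < 0) (ha : 0 < 2 + ((kb : ℝ) - 1) * α)
    (π : PIdx d → MIdx d → ℝ)
    (hπ : ∀ (n : PIdx d) (β : MIdx d), π n β ≠ 0 → (pDeg n : ℝ) < homog α kb β)
    (Γ : MIdx d → MIdx d → ℝ)
    (hΓk : ∀ (k : ℕ) (β : MIdx d),
      Γ β (Finsupp.single (Sum.inl k) 1) =
        if β = Finsupp.single (Sum.inl k) 1 then 1 else 0)
    (hΓn : ∀ (n : PIdx d) (β : MIdx d),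
      Γ β (Finsupp.single (Sum.inr n) 1) =
        (if β = Finsupp.single (Sum.inr n) 1 then 1 else 0) + π n β)
    (hΓ1 : ∀ β : MIdx d, Γ β 0 = if β = 0 then 1 else 0)
    (hΓmul : ∀ γ₁ γ₂ β : MIdx d,
      Γ β (γ₁ + γ₂) = ∑ p ∈ Finset.HasAntidiagonal.antidiagonal β, Γ p.1 γ₁ * Γ p.2 γ₂)
    :
    (∀ β : MIdx d, {γ : MIdx d | Γ β γ ≠ 0}.Finite) ∧
    (∀ β γ : MIdx d, Γ β γ ≠ (if γ = β then 1 else 0) →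
      homog α kb γ < homog α kb β) := by
  have hΓ : IsMultiplicative Γ := hΓmul
  have hsingle : ∀ j β, Γ β (Finsupp.single j 1) ≠ 0 → Precedes α kb (Finsupp.single j 1) β := by
    rintro (k | n) β h
    · obtain rfl : β = Finsupp.single (Sum.inl k) 1 :=
        by_contra fun hβ ↦ h (by rw [hΓk, if_neg hβ])
      exact Precedes.refl _
    · by_cases hβ : β = Finsupp.single (Sum.inr n) 1
      · exact hβ ▸ Precedes.refl _
      rw [hΓn, if_neg hβ, zero_add] at h
      exact precedes_single_inr (hπ n β h)
  have hsupp := hΓ.rel_of_ne_zero Precedes.add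
    (fun β h ↦ by simp_all [Precedes.refl]) hsingle
  have hdiag : ∀ j, Γ (Finsupp.single j 1) (Finsupp.single j 1) = 1 := by
    rintro (k | n)
    · simp [hΓk]
    · rw [hΓn, if_pos rfl, add_eq_left]
      by_contra h
      exact (hπ n _ h).ne' (homog_single_inr α kb n)
  have hone := hΓ.apply_self hsupp Precedes.eq_of_add_eq (by simp [hΓ1]) hdiag
  refine ⟨fun β ↦ (finite_setOf_precedes hα ha β).subset fun γ ↦ hsupp γ β, fun β γ hne ↦ ?_⟩
  by_cases hγβ : γ = β
  · subst hγβ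
    simp [hone] at hne
  · rw [if_neg hγβ] at hne
    exact (hsupp γ β hne).2.resolve_left hγβ

/-- the multiplicative recentering map `Γ` of `ℝ[[z_k, z_n]]`
(determined by `Γ z_k = z_k`, `Γ z_n = z_n + π^{(n)}`, `Γ 1 = 1` and
multiplicativity, given coefficientwise by the matrix `Γ_β^γ`), with
`π^{(n)}_β ≠ 0 ⟹ |n| < |β|`, is well defined (each row `β` has only finitely many
`γ` with `Γ_β^γ ≠ 0`) and strictly triangular with respect to homogeneity:
`(Γ − id)_β^γ ≠ 0 ⟹ |γ| < |β|`. -/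
theorem gamma_welldefined_triangular {d : ℕ} (α : ℝ) (kb : ℕ) (hkb : 3 ≤ kb)
    (hα : α < 0) (ha : 0 < 2 + ((kb : ℝ) - 1) * α)
    (π : PIdx d → MIdx d → ℝ)
    (hπ : ∀ (n : PIdx d) (β : MIdx d), π n β ≠ 0 → (pDeg n : ℝ) < homog α kb β)
    (Γ : MIdx d → MIdx d → ℝ)
    (hΓk : ∀ (k : ℕ) (β : MIdx d),
      Γ β (Finsupp.single (Sum.inl k) 1) =
        if β = Finsupp.single (Sum.inl k) 1 then 1 else 0)
    (hΓn : ∀ (n : PIdx d) (β : MIdx d),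
      Γ β (Finsupp.single (Sum.inr n) 1) =
        (if β = Finsupp.single (Sum.inr n) 1 then 1 else 0) + π n β)
    (hΓ1 : ∀ β : MIdx d, Γ β 0 = if β = 0 then 1 else 0)
    (hΓmul : ∀ γ₁ γ₂ β : MIdx d,
      Γ β (γ₁ + γ₂) = ∑ p ∈ Finset.HasAntidiagonal.antidiagonal β, Γ p.1 γ₁ * Γ p.2 γ₂)
    :
    (∀ β : MIdx d, {γ : MIdx d | Γ β γ ≠ 0}.Finite) ∧
    (∀ β γ : MIdx d, Γ β γ ≠ (if γ = β then 1 else 0) →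
      homog α kb γ < homog α kb β) :=
  gamma_welldefined_triangular_general α kb hα ha π hπ Γ hΓk hΓn hΓ1 hΓmul
end

section
/- Exponential formula for the multiplicative recentering map: under the hypotheses of the definition of Γ, for every multiindex γ one has Γ z^γ = Σ_{M≥0} (1/M!) Σ_{n₁,…,n_M} π^{(n₁)}⋯π^{(n_M)} D^{n₁}⋯D^{n_M} z^γ, where D^n = ∂_{z_n}; equivalently, componentwise, Γ^γ_β = Σ_{M≥0} (1/M!) Σ_{n₁,…,n_M} Σ_{β₁+⋯+β_{M+1}=β} π^{(n₁)}_{β₁}⋯π^{(n_M)}_{β_M} (D^{n₁}⋯D^{n_M} z^γ)_{β_{M+1}}. -/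
/-- The coefficient at `z^β` of `D^{n₁} ⋯ D^{n_M} z^γ`, where `D^n = ∂_{z_n}`
acts by `(D^n z^γ)_β = γ(n) · 1_{β = γ − δ_n}` (the head of the list is the
leftmost, i.e. last applied, derivative). -/
noncomputable def dCoeff {d : ℕ} : List (PIdx d) → MIdx d → MIdx d → ℝ
  | [], γ, β => if β = γ then 1 else 0
  | n :: ns, γ, β =>
      ((β (Sum.inr n) : ℝ) + 1) * dCoeff ns γ (β + Finsupp.single (Sum.inr n) 1)

/-!
Identify a coefficient family `β ↦ c β` with the power series `∑_β c β z^β`. Multiplicativity of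
`Γ` and its values on the generators give `Γ z^γ = ∏_j (z_j + ϖ_j)^{γ(j)}`, where `ϖ_k = 0` and
`ϖ_n = π^{(n)}`. The right-hand side is the truncated exponential `∑_{M ≤ |γ|} L^M z^γ / M!` of
`L = ∑_n π^{(n)} ∂_{z_n}`, the `π^{(n)}` being treated as constants. The Leibniz rule gives
`L^{M+1} (z_j f) = z_j L^{M+1} f + (M+1) ϖ_j L^M f`, so this exponential is also multiplied by
`z_j + ϖ_j` when a factor `z_j` is added, and both sides agree by induction on `γ`. Only the
finitely many `n` with `γ(n) ≠ 0` and the `M ≤ |γ|` contribute, which turns the series into finite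
sums.
-/

section

open Finsupp MvPowerSeries

theorem Finsupp.eq_prod_pow_of_map_single_one_add {σ M : Type*} [CommMonoid M]
    (H : (σ →₀ ℕ) → M) (c : σ → M) (h0 : H 0 = 1)
    (hstep : ∀ j γ, H (single j 1 + γ) = c j * H γ) (γ : σ →₀ ℕ) :
    H γ = γ.prod fun j m => c j ^ m := by
  induction γ using Finsupp.induction with
  | zero => rw [h0, prod_zero_index]
  | single_add a b f _ _ ih =>
    have hpow : ∀ n, H (single a n + f) = c a ^ n * H f := by
      intro n
      induction n with
      | zero => rw [single_zero, zero_add, pow_zero, one_mul]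
      | succ n ihn =>
        rw [single_add, add_comm (single a n), add_assoc, hstep, ihn, pow_succ', mul_assoc]
    rw [hpow, ih, prod_add_index' (fun _ => pow_zero _) (fun _ => pow_add _),
      prod_single_index (h := fun j m => c j ^ m) (pow_zero _)]

theorem Finset.sum_piFinset_fin_succ {α M : Type*} [AddCommMonoid M] [DecidableEq α] {n : ℕ}
    (B : Finset α) (g : (Fin (n + 1) → α) → M) :
    ∑ bs ∈ Fintype.piFinset (fun _ => B), g bs =
      ∑ b ∈ B, ∑ bs ∈ Fintype.piFinset (fun _ => B), g (Fin.cons b bs) := by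
  rw [← Finset.sum_product']
  refine Finset.sum_nbij' (fun bs => (bs 0, Fin.tail bs)) (fun p => Fin.cons p.1 p.2) ?_ ?_ ?_ ?_ ?_
  · intro bs hbs
    simp only [Fintype.mem_piFinset, Finset.mem_product] at hbs ⊢
    exact ⟨hbs 0, fun i => hbs i.succ⟩
  · intro p hp
    simp only [Fintype.mem_piFinset, Finset.mem_product] at hp ⊢
    exact Fin.cases hp.1 hp.2
  · intro bs _; simp
  · intro p _; simp
  · intro bs _; simp

theorem Finset.sum_antidiagonal_eq_sum_ite {A M : Type*} [AddCommMonoid A] [PartialOrder A]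
    [CanonicallyOrderedAdd A] [Sub A] [OrderedSub A] [AddLeftReflectLE A]
    [LocallyFiniteOrderBot A] [HasAntidiagonal A] [DecidableLE A] [AddCommMonoid M]
    {β : A} {B : Finset A} (hB : Finset.Iic β ⊆ B) (g : A → A → M) :
    ∑ p ∈ antidiagonal β, g p.1 p.2 = ∑ b ∈ B, if b ≤ β then g b (β - b) else 0 := by
  rw [← Finset.sum_filter, Finset.filter_congr_decidable]
  have hfilter : B.filter (· ≤ β) = Finset.Iic β := by
    ext b
    simpa using fun hb => hB (Finset.mem_Iic.mpr hb)
  rw [hfilter]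
  refine Finset.sum_nbij' Prod.fst (fun b => (b, β - b)) ?_ ?_ ?_ (fun _ _ => rfl) ?_ <;>
    simp only [Finset.HasAntidiagonal.mem_antidiagonal, Finset.mem_Iic]
  · rintro ⟨a, c⟩ rfl
    exact le_self_add
  · exact fun b hb => add_tsub_cancel_of_le hb
  · rintro ⟨a, c⟩ rfl
    rw [add_tsub_cancel_left]
  · rintro ⟨a, c⟩ rfl
    rw [add_tsub_cancel_left]

theorem tsum_eq_sum_subtype_pi {κ α M : Type*} [Fintype κ] [DecidableEq κ] [AddCommMonoid M]
    [TopologicalSpace M] (S : Finset α) (F : (κ → α) → M)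
    (hF : ∀ ns, (∃ i, ns i ∉ S) → F ns = 0) :
    ∑' ns, F ns = ∑ ns : κ → S, F fun i => ns i := by
  let e : (κ → S) ↪ (κ → α) :=
    ⟨fun ns i => ns i, fun _ _ h => funext fun i => Subtype.ext (congrFun h i)⟩
  rw [tsum_eq_sum (s := Finset.univ.map e), Finset.sum_map]
  · rfl
  intro ns hns
  refine hF ns (not_forall.mp fun h => hns ?_)
  exact Finset.mem_map.mpr ⟨fun i => ⟨ns i, h i⟩, Finset.mem_univ _, rfl⟩

namespace MvPowerSeries

section CommRing

variable {σ R : Type*} [CommRing R]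

variable (R) in
noncomputable def iterPDeriv : {M : ℕ} → (Fin M → σ) → MvPowerSeries σ R → MvPowerSeries σ R
  | 0, _, f => f
  | _ + 1, ns, f => pderiv R (ns 0) (iterPDeriv (Fin.tail ns) f)

@[simp]
theorem iterPDeriv_zero (ns : Fin 0 → σ) (f : MvPowerSeries σ R) : iterPDeriv R ns f = f := rfl

@[simp]
theorem iterPDeriv_cons {M : ℕ} (a : σ) (ns : Fin M → σ) (f : MvPowerSeries σ R) :
    iterPDeriv R (Fin.cons a ns) f = pderiv R a (iterPDeriv R ns f) := rfl

theorem iterPDeriv_X_mul [DecidableEq σ] {M : ℕ} (ns : Fin (M + 1) → σ) (j : σ)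
    (f : MvPowerSeries σ R) :
    iterPDeriv R ns (X j * f) = X j * iterPDeriv R ns f +
      ∑ i, if ns i = j then iterPDeriv R (i.removeNth ns) f else 0 := by
  induction M with
  | zero =>
    refine Fin.consCases (fun a ns => ?_) ns
    simp [Derivation.leibniz, pderiv_X, Pi.single_apply, eq_comm]
  | succ M ih =>
    refine Fin.consCases (fun a ns => ?_) ns
    have hrem (i : Fin (M + 1)) :
        i.succ.removeNth (Fin.cons a ns : Fin (M + 2) → σ) = Fin.cons a (i.removeNth ns) :=
      Fin.cons_comp_succ_succAbove a ns i
    simp only [iterPDeriv_cons, ih, hrem, map_add, map_sum, map_zero, apply_ite (pderiv R a),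
      Derivation.leibniz, pderiv_X, Pi.single_apply, smul_eq_mul, boole_mul, eq_comm (a := j),
      mul_comm (iterPDeriv R ns f), Fin.sum_univ_succ (n := M + 1), Fin.cons_zero, Fin.cons_succ,
      Fin.removeNth_zero, Fin.tail_cons]
    abel

theorem coeff_add_sum_single_ne_zero_of_coeff_iterPDeriv_ne_zero {M : ℕ} (ns : Fin M → σ)
    {f : MvPowerSeries σ R} {β : σ →₀ ℕ} (h : coeff β (iterPDeriv R ns f) ≠ 0) :
    coeff (β + ∑ i, single (ns i) 1) f ≠ 0 := by
  induction M generalizing β with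
  | zero => simpa using h
  | succ M ih =>
    revert h
    refine Fin.consCases (fun a ns => ?_) ns
    intro h
    rw [iterPDeriv_cons, coeff_pderiv] at h
    simpa [Fin.sum_univ_succ, add_assoc] using ih ns (left_ne_zero_of_mul h)

theorem iterPDeriv_monomial_eq_zero {M : ℕ} {ns : Fin M → σ} {γ : σ →₀ ℕ}
    (h : ¬ ∑ i, single (ns i) 1 ≤ γ) (a : R) : iterPDeriv R ns (monomial γ a) = 0 := by
  classical
  ext β
  by_contra hβ
  have := coeff_add_sum_single_ne_zero_of_coeff_iterPDeriv_ne_zero ns hβ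
  rw [coeff_monomial, ite_ne_right_iff] at this
  exact h (this.1 ▸ le_add_self)

theorem iterPDeriv_monomial_eq_zero_of_degree_lt {M : ℕ} (ns : Fin M → σ) {γ : σ →₀ ℕ}
    (h : γ.degree < M) (a : R) : iterPDeriv R ns (monomial γ a) = 0 := by
  refine iterPDeriv_monomial_eq_zero (fun hle => h.not_ge ?_) a
  simpa using degree_mono hle

theorem iterPDeriv_monomial_eq_zero_of_apply_eq_zero {M : ℕ} {ns : Fin M → σ} {γ : σ →₀ ℕ}
    {i : Fin M} (h : γ (ns i) = 0) (a : R) : iterPDeriv R ns (monomial γ a) = 0 := by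
  refine iterPDeriv_monomial_eq_zero (fun hle => ?_) a
  have := (Finset.single_le_sum (fun k _ => (zero_le : 0 ≤ single (ns k) 1))
    (Finset.mem_univ i)).trans hle
  simpa [h] using this (ns i)

-- The box `B ⊇ Iic β` is arbitrary so that the induction can pass from `β` to `β - b`.
theorem coeff_prod_mul_eq_sum_piFinset [DecidableEq σ] {M : ℕ} (φ : Fin M → MvPowerSeries σ R)
    (ψ : MvPowerSeries σ R) {β : σ →₀ ℕ} {B : Finset (σ →₀ ℕ)} (hB : Finset.Iic β ⊆ B) :
    coeff β ((∏ i, φ i) * ψ) = ∑ bs ∈ Fintype.piFinset fun _ => B,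
      if ∑ i, bs i ≤ β then (∏ i, coeff (bs i) (φ i)) * coeff (β - ∑ i, bs i) ψ else 0 := by
  induction M generalizing β with
  | zero => simp
  | succ M ih =>
    rw [Fin.prod_univ_succ, mul_assoc, coeff_mul,
      Finset.sum_antidiagonal_eq_sum_ite hB
        (fun a c => coeff a (φ 0) * coeff c ((∏ i : Fin M, φ i.succ) * ψ)),
      Finset.sum_piFinset_fin_succ]
    refine Finset.sum_congr rfl fun b _ => ?_
    simp only [Fin.sum_univ_succ, Fin.prod_univ_succ, Fin.cons_zero, Fin.cons_succ]
    split_ifs with hb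
    · rw [ih _ ((Finset.Iic_subset_Iic.mpr tsub_le_self).trans hB), Finset.mul_sum]
      refine Finset.sum_congr rfl fun bs _ => ?_
      simp only [le_tsub_iff_left hb, tsub_add_eq_tsub_tsub, mul_ite, mul_zero, mul_assoc]
    · exact (Finset.sum_eq_zero fun bs _ => if_neg fun h => hb (le_self_add.trans h)).symm

theorem coeff_prod_mul_eq_tsum [TopologicalSpace R] {M : ℕ}
    (φ : Fin M → MvPowerSeries σ R) (ψ : MvPowerSeries σ R) (β : σ →₀ ℕ) :
    coeff β ((∏ i, φ i) * ψ) = ∑' bs : Fin M → σ →₀ ℕ,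
      if ∑ i, bs i ≤ β then (∏ i, coeff (bs i) (φ i)) * coeff (β - ∑ i, bs i) ψ else 0 := by
  classical
  rw [coeff_prod_mul_eq_sum_piFinset φ ψ subset_rfl, tsum_eq_sum]
  intro bs hbs
  obtain ⟨i, hi⟩ := not_forall.mp (Fintype.mem_piFinset.not.mp hbs)
  exact if_neg fun h => hi (Finset.mem_Iic.mpr
    ((Finset.single_le_sum (fun k _ => (zero_le : 0 ≤ bs k)) (Finset.mem_univ i)).trans h))

section Taylor

variable {ι : Type*} [Fintype ι] (v : ι → σ) (φ : ι → MvPowerSeries σ R)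

/-- `(∑ x, φ x ∂_{v x})^M f`, with the coefficients `φ x` kept outside the derivatives. -/
noncomputable def taylorTerm (M : ℕ) (f : MvPowerSeries σ R) : MvPowerSeries σ R :=
  ∑ ns : Fin M → ι, (∏ i, φ (ns i)) * iterPDeriv R (v ∘ ns) f

@[simp]
theorem taylorTerm_zero (f : MvPowerSeries σ R) : taylorTerm v φ 0 f = f := by
  simp [taylorTerm]

theorem sum_mul_iterPDeriv_removeNth [DecidableEq σ] {M : ℕ} (i : Fin (M + 1)) (j : σ)
    (f : MvPowerSeries σ R) :
    ∑ ns : Fin (M + 1) → ι, (∏ k, φ (ns k)) *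
        (if v (ns i) = j then iterPDeriv R (i.removeNth (v ∘ ns)) f else 0) =
      (∑ x with v x = j, φ x) * taylorTerm v φ M f := by
  rw [← (Fin.insertNthEquiv (fun _ => ι) i).sum_comp, Fintype.sum_prod_type, Finset.sum_filter,
    taylorTerm, Finset.sum_mul]
  refine Finset.sum_congr rfl fun x _ => ?_
  have hrem (ns : Fin M → ι) :
      i.removeNth (v ∘ Fin.insertNthEquiv (fun _ => ι) i (x, ns)) = v ∘ ns := by
    ext k
    simp [Fin.removeNth]
  simp [Fin.prod_univ_succAbove _ i, Finset.mul_sum, mul_assoc, hrem]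

theorem taylorTerm_succ_X_mul [DecidableEq σ] (M : ℕ) (j : σ) (f : MvPowerSeries σ R) :
    taylorTerm v φ (M + 1) (X j * f) =
      X j * taylorTerm v φ (M + 1) f +
        ((M + 1 : ℕ) : R) • ((∑ x with v x = j, φ x) * taylorTerm v φ M f) := by
  simp only [taylorTerm, iterPDeriv_X_mul, mul_add, Finset.sum_add_distrib, Finset.mul_sum,
    Function.comp_apply]
  rw [Finset.sum_comm (s := Finset.univ) (t := Finset.univ)]
  simp only [← Finset.mul_sum, sum_mul_iterPDeriv_removeNth, Finset.sum_const, Finset.card_univ,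
    Fintype.card_fin, Nat.cast_smul_eq_nsmul, mul_left_comm, mul_smul_comm]
  rfl

theorem taylorTerm_monomial_eq_zero {M : ℕ} {γ : σ →₀ ℕ} (h : γ.degree < M) (a : R) :
    taylorTerm v φ M (monomial γ a) = 0 :=
  Finset.sum_eq_zero fun ns _ => by
    rw [iterPDeriv_monomial_eq_zero_of_degree_lt _ h, mul_zero]

end Taylor

end CommRing

section Field

variable {σ R : Type*} [Field R] {ι : Type*} [Fintype ι] (v : ι → σ)
  (φ : ι → MvPowerSeries σ R)

noncomputable def taylorSum (K : ℕ) (f : MvPowerSeries σ R) : MvPowerSeries σ R :=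
  ∑ M ∈ Finset.range K, (M.factorial : R)⁻¹ • taylorTerm v φ M f

theorem taylorSum_succ_X_mul [CharZero R] [DecidableEq σ] (K : ℕ) (j : σ)
    (f : MvPowerSeries σ R) :
    taylorSum v φ (K + 1) (X j * f) =
      X j * taylorSum v φ (K + 1) f + (∑ x with v x = j, φ x) * taylorSum v φ K f := by
  have hfac (M : ℕ) (g : MvPowerSeries σ R) :
      ((M + 1).factorial : R)⁻¹ • ((M + 1 : ℕ) : R) • g = (M.factorial : R)⁻¹ • g := by
    rw [smul_smul, Nat.factorial_succ, Nat.cast_mul, mul_inv, mul_comm, ← mul_assoc,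
      mul_inv_cancel₀ (Nat.cast_ne_zero.mpr M.succ_ne_zero), one_mul]
  simp only [taylorSum, Finset.sum_range_succ' _ K, taylorTerm_succ_X_mul, taylorTerm_zero,
    smul_add, hfac, Finset.sum_add_distrib, mul_add, Finset.mul_sum, mul_smul_comm]
  abel

theorem taylorSum_monomial_succ {γ : σ →₀ ℕ} {K : ℕ} (h : γ.degree < K) (a : R) :
    taylorSum v φ (K + 1) (monomial γ a) = taylorSum v φ K (monomial γ a) := by
  rw [taylorSum, Finset.sum_range_succ, taylorTerm_monomial_eq_zero v φ h, smul_zero, add_zero,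
    taylorSum]

theorem taylorSum_monomial [CharZero R] [DecidableEq σ] (γ : σ →₀ ℕ) :
    taylorSum v φ (γ.degree + 1) (monomial γ 1) =
      γ.prod fun j m => (X j + ∑ x with v x = j, φ x) ^ m := by
  refine eq_prod_pow_of_map_single_one_add (fun γ => taylorSum v φ (γ.degree + 1) (monomial γ 1))
    _ ?_ (fun j γ => ?_) γ
  · simp [taylorSum]
  · have hX : monomial (single j 1 + γ) (1 : R) = X j * monomial γ 1 := by
      rw [X_def, monomial_mul_monomial, one_mul]
    simp only [map_add, degree_single, hX, add_comm 1 γ.degree, taylorSum_succ_X_mul,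
      taylorSum_monomial_succ v φ (lt_add_one _), add_mul]

end Field

end MvPowerSeries

variable {d : ℕ}

theorem dCoeff_ofFn {M : ℕ} (ns : Fin M → PIdx d) (γ β : MIdx d) :
    dCoeff (List.ofFn ns) γ β = coeff β (iterPDeriv ℝ (Sum.inr ∘ ns) (monomial γ 1)) := by
  classical
  induction M generalizing β with
  | zero => simp [dCoeff, coeff_monomial]
  | succ M ih =>
    refine Fin.consCases (fun a ns => ?_) ns
    rw [List.ofFn_succ, Fin.comp_cons, iterPDeriv_cons, coeff_pderiv]
    simp only [Fin.cons_zero, Fin.cons_succ, dCoeff, ih]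
    rw [mul_comm]

/-- `Γ z_j = z_j + recenteringShift π j`; a coefficient family `MIdx d → ℝ` is read as the power
series with these coefficients. -/
def recenteringShift (π : PIdx d → MIdx d → ℝ) : ℕ ⊕ PIdx d → MvPowerSeries (ℕ ⊕ PIdx d) ℝ
  | Sum.inl _ => 0
  | Sum.inr n => π n

@[simp]
theorem recenteringShift_inl (π : PIdx d → MIdx d → ℝ) (k : ℕ) :
    recenteringShift π (Sum.inl k) = 0 := rfl

theorem coeff_recenteringShift_inr (π : PIdx d → MIdx d → ℝ) (n : PIdx d) (β : MIdx d) :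
    coeff β (recenteringShift π (Sum.inr n)) = π n β := rfl

theorem recentering_eq_coeff_prod (π : PIdx d → MIdx d → ℝ) (Γ : MIdx d → MIdx d → ℝ)
    (hΓk : ∀ (k : ℕ) (β : MIdx d),
      Γ β (Finsupp.single (Sum.inl k) 1) =
        if β = Finsupp.single (Sum.inl k) 1 then 1 else 0)
    (hΓn : ∀ (n : PIdx d) (β : MIdx d),
      Γ β (Finsupp.single (Sum.inr n) 1) =
        (if β = Finsupp.single (Sum.inr n) 1 then 1 else 0) + π n β)
    (hΓ1 : ∀ β : MIdx d, Γ β 0 = if β = 0 then 1 else 0)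
    (hΓmul : ∀ γ₁ γ₂ β : MIdx d,
      Γ β (γ₁ + γ₂) = ∑ p ∈ Finset.HasAntidiagonal.antidiagonal β, Γ p.1 γ₁ * Γ p.2 γ₂)
    (β γ : MIdx d) :
    Γ β γ = coeff β (γ.prod fun j m => (X j + recenteringShift π j) ^ m) := by
  classical
  let G : MIdx d → MvPowerSeries (ℕ ⊕ PIdx d) ℝ := fun γ β => Γ β γ
  refine congrArg (coeff β) (eq_prod_pow_of_map_single_one_add G _ ?_ (fun j γ => ?_) γ)
  · ext β
    exact (hΓ1 β).trans (coeff_one β).symm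
  · ext β
    change Γ β _ = coeff β (_ * G γ)
    rw [hΓmul, coeff_mul]
    refine Finset.sum_congr rfl fun p _ => congrArg (· * Γ p.2 γ) ?_
    cases j with
    | inl k => simp [hΓk, coeff_X]
    | inr n =>
      rw [hΓn, map_add, coeff_X, coeff_recenteringShift_inr]

theorem sum_filter_inr_recenteringShift (π : PIdx d → MIdx d → ℝ) {S : Finset (PIdx d)}
    {j : ℕ ⊕ PIdx d} (hj : ∀ n, j = Sum.inr n → n ∈ S) :
    ∑ x : S with Sum.inr x.1 = j, recenteringShift π (Sum.inr x.1) = recenteringShift π j := by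
  cases j with
  | inl k => simp
  | inr n =>
    rw [Finset.sum_eq_single_of_mem ⟨n, hj n rfl⟩ (by simp)]
    intro x hx hne
    simp_all [Subtype.ext_iff]

open scoped Classical in
theorem coeff_taylorSum_eq_tsum (π : PIdx d → MIdx d → ℝ) {γ : MIdx d} {S : Finset (PIdx d)}
    (hS : ∀ n, γ (Sum.inr n) ≠ 0 → n ∈ S) (β : MIdx d) {K : ℕ} (hK : γ.degree < K) :
    coeff β (taylorSum (fun x : S => Sum.inr x.1) (fun x => recenteringShift π (Sum.inr x.1)) K
      (monomial γ 1)) =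
      ∑' M : ℕ, (M.factorial : ℝ)⁻¹ *
        ∑' ns : Fin M → PIdx d, ∑' bs : Fin M → MIdx d,
          if (∑ i, bs i) ≤ β then
            (∏ i, π (ns i) (bs i)) * dCoeff (List.ofFn ns) γ (β - ∑ i, bs i)
          else 0 := by
  have hinner (M : ℕ) (ns : Fin M → PIdx d) :
      ∑' bs : Fin M → MIdx d, (if (∑ i, bs i) ≤ β then
        (∏ i, π (ns i) (bs i)) * dCoeff (List.ofFn ns) γ (β - ∑ i, bs i) else 0) =
      coeff β ((∏ i, recenteringShift π (Sum.inr (ns i))) *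
        iterPDeriv ℝ (Sum.inr ∘ ns) (monomial γ 1)) := by
    rw [coeff_prod_mul_eq_tsum]
    simp_rw [dCoeff_ofFn, coeff_recenteringShift_inr]
  simp_rw [hinner]
  rw [tsum_eq_sum (s := Finset.range K)]
  · rw [taylorSum, map_sum]
    refine Finset.sum_congr rfl fun M _ => ?_
    rw [coeff_smul, taylorTerm, map_sum, tsum_eq_sum_subtype_pi S]
    · rfl
    rintro ns ⟨i, hi⟩
    rw [iterPDeriv_monomial_eq_zero_of_apply_eq_zero (i := i) (not_imp_comm.mp (hS _) hi),
      mul_zero, map_zero]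
  · intro M hM
    have hM' : γ.degree < M := hK.trans_le (not_lt.mp (Finset.mem_range.not.mp hM))
    simp [iterPDeriv_monomial_eq_zero_of_degree_lt _ hM']

end

open scoped Classical in
theorem gamma_exponential_formula_general {d : ℕ}
    (π : PIdx d → MIdx d → ℝ)
    (Γ : MIdx d → MIdx d → ℝ)
    (hΓk : ∀ (k : ℕ) (β : MIdx d),
      Γ β (Finsupp.single (Sum.inl k) 1) =
        if β = Finsupp.single (Sum.inl k) 1 then 1 else 0)
    (hΓn : ∀ (n : PIdx d) (β : MIdx d),
      Γ β (Finsupp.single (Sum.inr n) 1) =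
        (if β = Finsupp.single (Sum.inr n) 1 then 1 else 0) + π n β)
    (hΓ1 : ∀ β : MIdx d, Γ β 0 = if β = 0 then 1 else 0)
    (hΓmul : ∀ γ₁ γ₂ β : MIdx d,
      Γ β (γ₁ + γ₂) = ∑ p ∈ Finset.HasAntidiagonal.antidiagonal β, Γ p.1 γ₁ * Γ p.2 γ₂)
    :
    ∀ β γ : MIdx d,
      Γ β γ = ∑' M : ℕ, (M.factorial : ℝ)⁻¹ *
        ∑' ns : Fin M → PIdx d, ∑' bs : Fin M → MIdx d,
          if (∑ i, bs i) ≤ β then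
            (∏ i, π (ns i) (bs i)) * dCoeff (List.ofFn ns) γ (β - ∑ i, bs i)
          else 0 := by
  intro β γ
  let S : Finset (PIdx d) := γ.support.preimage Sum.inr Sum.inr_injective.injOn
  have hS (n : PIdx d) (hn : γ (Sum.inr n) ≠ 0) : n ∈ S := by simpa [S] using hn
  rw [recentering_eq_coeff_prod π Γ hΓk hΓn hΓ1 hΓmul, ← coeff_taylorSum_eq_tsum π hS β
    (lt_add_one γ.degree), MvPowerSeries.taylorSum_monomial]
  congr 1
  refine Finsupp.prod_congr fun j hj => ?_
  rw [sum_filter_inr_recenteringShift]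
  rintro n rfl
  exact hS n (Finsupp.mem_support_iff.mp hj)

open scoped Classical in
/-- exponential formula for the multiplicative recentering map:
`Γ^γ_β = Σ_{M≥0} (1/M!) Σ_{n₁,…,n_M} Σ_{β₁+⋯+β_{M+1}=β}
π^{(n₁)}_{β₁} ⋯ π^{(n_M)}_{β_M} (D^{n₁}⋯D^{n_M} z^γ)_{β_{M+1}}`,
all the sums having only finitely many nonzero terms. -/
theorem gamma_exponential_formula {d : ℕ} (α : ℝ) (kb : ℕ) (hkb : 3 ≤ kb)
    (hα : α < 0) (ha : 0 < 2 + ((kb : ℝ) - 1) * α)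
    (π : PIdx d → MIdx d → ℝ)
    (hπ : ∀ (n : PIdx d) (β : MIdx d), π n β ≠ 0 → (pDeg n : ℝ) < homog α kb β)
    (Γ : MIdx d → MIdx d → ℝ)
    (hΓk : ∀ (k : ℕ) (β : MIdx d),
      Γ β (Finsupp.single (Sum.inl k) 1) =
        if β = Finsupp.single (Sum.inl k) 1 then 1 else 0)
    (hΓn : ∀ (n : PIdx d) (β : MIdx d),
      Γ β (Finsupp.single (Sum.inr n) 1) =
        (if β = Finsupp.single (Sum.inr n) 1 then 1 else 0) + π n β)
    (hΓ1 : ∀ β : MIdx d, Γ β 0 = if β = 0 then 1 else 0)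
    (hΓmul : ∀ γ₁ γ₂ β : MIdx d,
      Γ β (γ₁ + γ₂) = ∑ p ∈ Finset.HasAntidiagonal.antidiagonal β, Γ p.1 γ₁ * Γ p.2 γ₂)
    :
    ∀ β γ : MIdx d,
      Γ β γ = ∑' M : ℕ, (M.factorial : ℝ)⁻¹ *
        ∑' ns : Fin M → PIdx d, ∑' bs : Fin M → MIdx d,
          if (∑ i, bs i) ≤ β then
            (∏ i, π (ns i) (bs i)) * dCoeff (List.ofFn ns) γ (β - ∑ i, bs i)
          else 0 :=
  gamma_exponential_formula_general π Γ hΓk hΓn hΓ1 hΓmul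
end

section
/- Let dΓ be the derivation-like map on ℝ[[z_k,z_n]] determined by dΓ z_k = 0, dΓ z_n = dπ^{(n)}, and dΓ(π₁π₂) = (dΓπ₁)(Γπ₂) + (Γπ₁)(dΓπ₂), where dπ^{(n)}_β ≠ 0 implies |n| < α + D/p̄ (with p̄ ≥ 2). Then dΓ satisfies the closed formula dΓ z^γ = Σ_n dπ^{(n)} · Γ(D^n z^γ), and the triangularity: dΓ_β^γ ≠ 0 implies |γ| < |β| + D/p̄. -/
/-!
`Γ` is multiplicative on monomials and `dΓ` is a `Γ`-derivation, so both are determined by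
their values on the generators `z_i`; unwinding the Leibniz rule one generator at a time gives
`dΓ z^γ = ∑_i γ_i (dΓ z_i) Γ(z^{γ - e_i})`, which is the closed formula since `dΓ z_k = 0`.

For the triangularity, `|β| - α` is an additive weight on multi-indices, nonnegative because
`α < 0 < 2 + (k̲ - 1) α`. Hence a bound of the form "`coeff_β ≠ 0` only if `|γ| ≤ |β|`" passes from
the generators to all products. It holds for `Γ z_n = z_n + π^{(n)}` because `|n| < |β|` on the
support of `π^{(n)}`, and for `dΓ z_n = dπ^{(n)}` with the loss `D/p̄`, because
`|z_n| - α = |n| - α < D/p̄ ≤ |β| - α + D/p̄` on the support of `dπ^{(n)}`.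
-/

open Finset Finsupp MvPowerSeries

theorem Finsupp.induction_on_single_one {σ : Type*} {motive : (σ →₀ ℕ) → Prop}
    (γ : σ →₀ ℕ) (zero : motive 0) (add_single : ∀ γ i, motive γ → motive (γ + single i 1)) :
    motive γ := by
  induction γ using Finsupp.induction with
  | zero => exact zero
  | single_add i m γ _ hm ih =>
    clear hm
    induction m with
    | zero => simpa using ih
    | succ m ihm =>
      rw [single_add, add_right_comm]
      exact add_single _ i ihm

theorem MvPowerSeries.exists_coeff_ne_zero_of_coeff_mul_ne_zero {σ R : Type*} [DecidableEq σ]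
    [Semiring R] {f g : MvPowerSeries σ R} {β : σ →₀ ℕ} (h : coeff β (f * g) ≠ 0) :
    ∃ p ∈ antidiagonal β, coeff p.1 f ≠ 0 ∧ coeff p.2 g ≠ 0 := by
  rw [coeff_mul] at h
  obtain ⟨p, hp, hne⟩ := Finset.exists_ne_zero_of_sum_ne_zero h
  exact ⟨p, hp, left_ne_zero_of_mul hne, right_ne_zero_of_mul hne⟩

section Leibniz

variable {σ A : Type*} [CommSemiring A] {F D : (σ →₀ ℕ) → A}

theorem eq_sum_of_leibniz (hF : ∀ a b, F (a + b) = F a * F b) (hD0 : D 0 = 0)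
    (hD : ∀ a b, D (a + b) = D a * F b + F a * D b) (γ : σ →₀ ℕ) {T : Finset σ}
    (hT : γ.support ⊆ T) :
    D γ = ∑ i ∈ T, γ i • (D (single i 1) * F (γ - single i 1)) := by
  classical
  induction γ using Finsupp.induction_on_single_one with
  | zero => simp [hD0]
  | add_single γ j ih =>
    have hγT : γ.support ⊆ T := fun i hi => hT <| by
      simp only [mem_support_iff, Finsupp.coe_add, Pi.add_apply] at hi ⊢; omega
    have hjT : j ∈ T := hT <| by simp
    have shift : ∀ i ∈ T, γ i • (D (single i 1) * F (γ - single i 1)) * F (single j 1) =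
        γ i • (D (single i 1) * F (γ + single j 1 - single i 1)) := fun i _ => by
      rcases eq_or_ne (γ i) 0 with hi | hi
      · simp [hi]
      · rw [smul_mul_assoc, mul_assoc, ← hF, sub_single_one_add hi]
    calc D (γ + single j 1)
        = D γ * F (single j 1) + F γ * D (single j 1) := hD _ _
      _ = ∑ i ∈ T, γ i • (D (single i 1) * F (γ + single j 1 - single i 1))
            + D (single j 1) * F (γ + single j 1 - single j 1) := by
          rw [ih hγT, Finset.sum_mul, Finset.sum_congr rfl shift, add_tsub_cancel_right, mul_comm]
      _ = ∑ i ∈ T, (γ + single j 1 : σ →₀ ℕ) i •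
            (D (single i 1) * F (γ + single j 1 - single i 1)) := by
          simp only [Finsupp.coe_add, Pi.add_apply, add_smul, Finset.sum_add_distrib, single_apply,
            ite_smul, one_smul, zero_smul, Finset.sum_ite_eq, hjT, if_true]

end Leibniz

section Triangular

variable {σ R M : Type*} [Semiring R] [AddCommMonoid M] [PartialOrder M]
  (w : (σ →₀ ℕ) →+ M) {F D : (σ →₀ ℕ) → MvPowerSeries σ R}

theorem weight_le_of_coeff_ne_zero_of_multiplicative [IsOrderedAddMonoid M] (hF0 : F 0 = 1)
    (hF : ∀ a b, F (a + b) = F a * F b)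
    (hgen : ∀ i β, coeff β (F (single i 1)) ≠ 0 → w (single i 1) ≤ w β)
    (γ β : σ →₀ ℕ) (h : coeff β (F γ) ≠ 0) : w γ ≤ w β := by
  classical
  induction γ using Finsupp.induction_on_single_one generalizing β with
  | zero =>
    rw [hF0, coeff_one] at h
    rw [(ite_ne_right_iff.1 h).1]
  | add_single γ j ih =>
    rw [hF] at h
    obtain ⟨p, hp, h₁, h₂⟩ := exists_coeff_ne_zero_of_coeff_mul_ne_zero h
    rw [← mem_antidiagonal.1 hp, map_add, map_add]
    exact add_le_add (ih _ h₁) (hgen _ _ h₂)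

theorem weight_lt_add_of_coeff_ne_zero_of_leibniz [IsOrderedCancelAddMonoid M] {c : M}
    (hD0 : D 0 = 0) (hD : ∀ a b, D (a + b) = D a * F b + F a * D b)
    (hF : ∀ γ β, coeff β (F γ) ≠ 0 → w γ ≤ w β)
    (hgen : ∀ i β, coeff β (D (single i 1)) ≠ 0 → w (single i 1) < w β + c)
    (γ β : σ →₀ ℕ) (h : coeff β (D γ) ≠ 0) : w γ < w β + c := by
  classical
  induction γ using Finsupp.induction_on_single_one generalizing β with
  | zero => simp [hD0] at h
  | add_single γ j ih =>
    rw [hD, map_add] at h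
    rcases ne_or_eq (coeff β (D γ * F (single j 1))) 0 with hl | hl
    · obtain ⟨p, hp, h₁, h₂⟩ := exists_coeff_ne_zero_of_coeff_mul_ne_zero hl
      rw [← mem_antidiagonal.1 hp, map_add, map_add, add_right_comm]
      exact add_lt_add_of_lt_of_le (ih _ h₁) (hF _ _ h₂)
    · rw [hl, zero_add] at h
      obtain ⟨p, hp, h₁, h₂⟩ := exists_coeff_ne_zero_of_coeff_mul_ne_zero h
      rw [← mem_antidiagonal.1 hp, map_add, map_add, add_assoc]
      exact add_lt_add_of_le_of_lt (hF _ _ h₁) (hgen _ _ h₂)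

end Triangular

theorem coeff_eq_tsum_of_leibniz {ι κ R : Type*} [DecidableEq ι] [DecidableEq κ] [CommSemiring R]
    [TopologicalSpace R] {F D : (ι ⊕ κ →₀ ℕ) → MvPowerSeries (ι ⊕ κ) R}
    (hF : ∀ a b, F (a + b) = F a * F b) (hD0 : D 0 = 0)
    (hD : ∀ a b, D (a + b) = D a * F b + F a * D b) (hDinl : ∀ k, D (single (Sum.inl k) 1) = 0)
    (β γ : ι ⊕ κ →₀ ℕ) :
    coeff β (D γ) = ∑' n, ∑ p ∈ antidiagonal β, coeff p.1 (D (single (Sum.inr n) 1)) *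
      ((γ (Sum.inr n) : R) * coeff p.2 (F (γ - single (Sum.inr n) 1))) := by
  set g : ι ⊕ κ → R := fun i => ∑ p ∈ antidiagonal β,
    coeff p.1 (D (single i 1)) * ((γ i : R) * coeff p.2 (F (γ - single i 1)))
  have hg : ∀ i ∉ γ.support, g i = 0 := fun i hi => by
    simp [g, Finsupp.notMem_support_iff.1 hi]
  have hg_inr : Function.support g ⊆ Set.range Sum.inr := by
    rintro (k | n) hk
    · simp [g, hDinl] at hk
    · exact ⟨n, rfl⟩
  calc coeff β (D γ) = ∑ i ∈ γ.support, g i := by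
        rw [eq_sum_of_leibniz hF hD0 hD γ subset_rfl, map_sum]
        refine sum_congr rfl fun i _ => ?_
        rw [map_nsmul, nsmul_eq_mul, coeff_mul, Finset.mul_sum]
        exact sum_congr rfl fun p _ => by ring
    _ = ∑' i, g i := (tsum_eq_sum hg).symm
    _ = ∑' n, g (Sum.inr n) := (Sum.inr_injective.tsum_eq hg_inr).symm

section Homogeneity

variable {d : ℕ}

def homogWeight (α : ℝ) (kb : ℕ) : ℕ ⊕ PIdx d → ℝ :=
  Sum.elim (fun _ => 2 + ((kb : ℝ) - 1) * α) (fun n => pDeg n - α)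

theorem homog_eq_add_weight (α : ℝ) (kb : ℕ) (β : MIdx d) :
    homog α kb β = α + weight (homogWeight α kb) β := by
  simp only [homog, kSum, nSum, npSum, weight_apply, Finsupp.sum, Nat.cast_sum]
  rw [← sub_eq_iff_eq_add', show ∀ x y z u : ℝ, α * (1 + x - y) + z + u - α = α * x - α * y + z + u
    from fun _ _ _ _ => by ring]
  simp only [Finset.mul_sum, ← Finset.sum_sub_distrib, ← Finset.sum_add_distrib]
  refine Finset.sum_congr rfl fun i _ => ?_
  cases i <;> simp [homogWeight] <;> ring

theorem weight_homogWeight_single_inr (α : ℝ) (kb : ℕ) (n : PIdx d) :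
    weight (homogWeight α kb) (single (Sum.inr n) 1) = pDeg n - α := by
  simp [weight_single, homogWeight]

theorem weight_homogWeight_nonneg {α : ℝ} {kb : ℕ} (hα : α ≤ 0) (ha : 0 ≤ 2 + ((kb : ℝ) - 1) * α)
    (β : MIdx d) : 0 ≤ weight (homogWeight α kb) β := by
  rw [weight_apply]
  refine Finsupp.sum_nonneg fun i _ => smul_nonneg (Nat.zero_le _) ?_
  cases i with
  | inl k => exact ha
  | inr n => simp only [homogWeight, Sum.elim_inr]; linarith [(pDeg n).cast_nonneg (α := ℝ)]

theorem weight_single_le_of_Gamma_ne_zero {α : ℝ} {kb : ℕ} {π : PIdx d → MIdx d → ℝ}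
    {Γ : MIdx d → MIdx d → ℝ} (hπ : ∀ n β, π n β ≠ 0 → (pDeg n : ℝ) < homog α kb β)
    (hΓk : ∀ k β, Γ β (single (Sum.inl k) 1) = if β = single (Sum.inl k) 1 then 1 else 0)
    (hΓn : ∀ n β, Γ β (single (Sum.inr n) 1) =
      (if β = single (Sum.inr n) 1 then 1 else 0) + π n β)
    (i : ℕ ⊕ PIdx d) (β : MIdx d) (h : Γ β (single i 1) ≠ 0) :
    weight (homogWeight α kb) (single i 1) ≤ weight (homogWeight α kb) β := by
  cases i with
  | inl k => rw [hΓk] at h; rw [(ite_ne_right_iff.1 h).1]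
  | inr n =>
    by_cases hβ : β = single (Sum.inr n) 1
    · rw [hβ]
    · have hn := hπ n β (by simpa [hΓn, hβ] using h)
      rw [weight_homogWeight_single_inr]
      linarith [homog_eq_add_weight α kb β]

theorem weight_single_lt_of_dGamma_ne_zero {α c : ℝ} {kb : ℕ} {dπ : PIdx d → MIdx d → ℝ}
    {dΓ : MIdx d → MIdx d → ℝ} (hα : α ≤ 0) (ha : 0 ≤ 2 + ((kb : ℝ) - 1) * α)
    (hdπ : ∀ n β, dπ n β ≠ 0 → (pDeg n : ℝ) < α + c)
    (hdΓk : ∀ k β, dΓ β (single (Sum.inl k) 1) = 0)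
    (hdΓn : ∀ n β, dΓ β (single (Sum.inr n) 1) = dπ n β)
    (i : ℕ ⊕ PIdx d) (β : MIdx d) (h : dΓ β (single i 1) ≠ 0) :
    weight (homogWeight α kb) (single i 1) < weight (homogWeight α kb) β + c := by
  cases i with
  | inl k => exact absurd (hdΓk k β) h
  | inr n =>
    rw [weight_homogWeight_single_inr]
    linarith [hdπ n β (hdΓn n β ▸ h), weight_homogWeight_nonneg hα ha β]

end Homogeneity

/-- The series `Γ z^γ = ∑_β Γ_β^γ z^β` of the operator with matrix `Γ_β^γ`. -/
def columnSeries {σ R : Type*} (M : (σ →₀ ℕ) → (σ →₀ ℕ) → R) (γ : σ →₀ ℕ) :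
    MvPowerSeries σ R :=
  fun β => M β γ

@[simp]
theorem coeff_columnSeries {σ R : Type*} [Semiring R] (M : (σ →₀ ℕ) → (σ →₀ ℕ) → R)
    (β γ : σ →₀ ℕ) : coeff β (columnSeries M γ) = M β γ :=
  rfl

theorem dGamma_formula_triangular_general {d : ℕ} (α pbar : ℝ) (kb : ℕ)
    (hα : α < 0) (ha : 0 < 2 + ((kb : ℝ) - 1) * α)
    (π : PIdx d → MIdx d → ℝ)
    (hπ : ∀ (n : PIdx d) (β : MIdx d), π n β ≠ 0 → (pDeg n : ℝ) < homog α kb β)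
    (Γ : MIdx d → MIdx d → ℝ)
    (hΓk : ∀ (k : ℕ) (β : MIdx d),
      Γ β (Finsupp.single (Sum.inl k) 1) =
        if β = Finsupp.single (Sum.inl k) 1 then 1 else 0)
    (hΓn : ∀ (n : PIdx d) (β : MIdx d),
      Γ β (Finsupp.single (Sum.inr n) 1) =
        (if β = Finsupp.single (Sum.inr n) 1 then 1 else 0) + π n β)
    (hΓ1 : ∀ β : MIdx d, Γ β 0 = if β = 0 then 1 else 0)
    (hΓmul : ∀ γ₁ γ₂ β : MIdx d,
      Γ β (γ₁ + γ₂) = ∑ p ∈ Finset.HasAntidiagonal.antidiagonal β, Γ p.1 γ₁ * Γ p.2 γ₂)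
    (dπ : PIdx d → MIdx d → ℝ)
    (hdπ : ∀ (n : PIdx d) (β : MIdx d), dπ n β ≠ 0 →
      (pDeg n : ℝ) < α + ((d : ℝ) + 2) / pbar)
    (dΓ : MIdx d → MIdx d → ℝ)
    (hdΓk : ∀ (k : ℕ) (β : MIdx d), dΓ β (Finsupp.single (Sum.inl k) 1) = 0)
    (hdΓn : ∀ (n : PIdx d) (β : MIdx d),
      dΓ β (Finsupp.single (Sum.inr n) 1) = dπ n β)
    (hdΓ1 : ∀ β : MIdx d, dΓ β 0 = 0)
    (hdΓmul : ∀ γ₁ γ₂ β : MIdx d,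
      dΓ β (γ₁ + γ₂) = ∑ p ∈ Finset.HasAntidiagonal.antidiagonal β,
        (dΓ p.1 γ₁ * Γ p.2 γ₂ + Γ p.1 γ₁ * dΓ p.2 γ₂)) :
    (∀ β γ : MIdx d,
      dΓ β γ = ∑' n : PIdx d, ∑ p ∈ Finset.HasAntidiagonal.antidiagonal β,
        dπ n p.1 * ((γ (Sum.inr n) : ℝ) *
          Γ p.2 (γ - Finsupp.single (Sum.inr n) 1))) ∧
    (∀ β γ : MIdx d, dΓ β γ ≠ 0 →
      homog α kb γ < homog α kb β + ((d : ℝ) + 2) / pbar) := by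
  set F := columnSeries Γ
  set D := columnSeries dΓ
  have hF0 : F 0 = 1 := by ext β; simp [F, hΓ1, coeff_one]
  have hF : ∀ a b, F (a + b) = F a * F b := fun a b => by
    ext β; rw [coeff_mul]; exact hΓmul a b β
  have hD0 : D 0 = 0 := by ext β; exact hdΓ1 β
  have hD : ∀ a b, D (a + b) = D a * F b + F a * D b := fun a b => by
    ext β; rw [map_add, coeff_mul, coeff_mul, ← sum_add_distrib]; exact hdΓmul a b β
  set w : MIdx d →+ ℝ := weight (homogWeight α kb)
  have hF_tri := weight_le_of_coeff_ne_zero_of_multiplicative w hF0 hF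
    (weight_single_le_of_Gamma_ne_zero hπ hΓk hΓn)
  have hD_tri := weight_lt_add_of_coeff_ne_zero_of_leibniz w hD0 hD hF_tri
    (weight_single_lt_of_dGamma_ne_zero hα.le ha.le hdπ hdΓk hdΓn)
  have hDinl : ∀ k, D (single (Sum.inl k) 1) = 0 := fun k => by ext β; exact hdΓk k β
  refine ⟨fun β γ => ?_, fun β γ h => ?_⟩
  · simpa [D, F, hdΓn] using coeff_eq_tsum_of_leibniz hF hD0 hD hDinl β γ
  · linarith [hD_tri γ β h, homog_eq_add_weight α kb γ, homog_eq_add_weight α kb β]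

/-- the derivation-like map `dΓ` on `ℝ[[z_k, z_n]]` (determined by
`dΓ z_k = 0`, `dΓ z_n = dπ^{(n)}`, `dΓ 1 = 0` and the Leibniz rule
`dΓ(π₁π₂) = (dΓπ₁)(Γπ₂) + (Γπ₁)(dΓπ₂)`), with `dπ^{(n)}_β ≠ 0 ⟹ |n| < α + D/p̄`,
satisfies the closed formula `dΓ z^γ = Σ_n dπ^{(n)} · Γ(D^n z^γ)` and the
triangularity `dΓ_β^γ ≠ 0 ⟹ |γ| < |β| + D/p̄`. -/
theorem dGamma_formula_triangular {d : ℕ} (α pbar : ℝ) (kb : ℕ) (hkb : 3 ≤ kb)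
    (hα : α < 0) (ha : 0 < 2 + ((kb : ℝ) - 1) * α) (hpbar : 2 ≤ pbar)
    (π : PIdx d → MIdx d → ℝ)
    (hπ : ∀ (n : PIdx d) (β : MIdx d), π n β ≠ 0 → (pDeg n : ℝ) < homog α kb β)
    (Γ : MIdx d → MIdx d → ℝ)
    (hΓk : ∀ (k : ℕ) (β : MIdx d),
      Γ β (Finsupp.single (Sum.inl k) 1) =
        if β = Finsupp.single (Sum.inl k) 1 then 1 else 0)
    (hΓn : ∀ (n : PIdx d) (β : MIdx d),
      Γ β (Finsupp.single (Sum.inr n) 1) =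
        (if β = Finsupp.single (Sum.inr n) 1 then 1 else 0) + π n β)
    (hΓ1 : ∀ β : MIdx d, Γ β 0 = if β = 0 then 1 else 0)
    (hΓmul : ∀ γ₁ γ₂ β : MIdx d,
      Γ β (γ₁ + γ₂) = ∑ p ∈ Finset.HasAntidiagonal.antidiagonal β, Γ p.1 γ₁ * Γ p.2 γ₂)
    (dπ : PIdx d → MIdx d → ℝ)
    (hdπ : ∀ (n : PIdx d) (β : MIdx d), dπ n β ≠ 0 →
      (pDeg n : ℝ) < α + ((d : ℝ) + 2) / pbar)
    (dΓ : MIdx d → MIdx d → ℝ)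
    (hdΓk : ∀ (k : ℕ) (β : MIdx d), dΓ β (Finsupp.single (Sum.inl k) 1) = 0)
    (hdΓn : ∀ (n : PIdx d) (β : MIdx d),
      dΓ β (Finsupp.single (Sum.inr n) 1) = dπ n β)
    (hdΓ1 : ∀ β : MIdx d, dΓ β 0 = 0)
    (hdΓmul : ∀ γ₁ γ₂ β : MIdx d,
      dΓ β (γ₁ + γ₂) = ∑ p ∈ Finset.HasAntidiagonal.antidiagonal β,
        (dΓ p.1 γ₁ * Γ p.2 γ₂ + Γ p.1 γ₁ * dΓ p.2 γ₂)) :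
    (∀ β γ : MIdx d,
      dΓ β γ = ∑' n : PIdx d, ∑ p ∈ Finset.HasAntidiagonal.antidiagonal β,
        dπ n p.1 * ((γ (Sum.inr n) : ℝ) *
          Γ p.2 (γ - Finsupp.single (Sum.inr n) 1))) ∧
    (∀ β γ : MIdx d, dΓ β γ ≠ 0 →
      homog α kb γ < homog α kb β + ((d : ℝ) + 2) / pbar) :=
  dGamma_formula_triangular_general α pbar kb hα ha π hπ Γ hΓk hΓn hΓ1 hΓmul dπ hdπ dΓ hdΓk hdΓn
    hdΓ1 hdΓmul
end
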